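/- arXiv:2301.10522 — 4 statements merged into one kernel-verified Lean document; each statement's English description precedes it below -/
import Mathlib

section
/- Necessary condition for achieving the common-intersection lifetime bound: if Ω_c = ∩_m Ω_m ≠ ∅, the sets Ω_m \ Ω_c are pairwise disjoint, and the swarm achieves lifetime i* = ⌊min_{n∈Ω_c} E_n(0)/(p·T+ε'+ε)⌋, then i* ≤ Σ_{m=1}^M ⌊(min_{n∈Ω_m\Ω_c} E_n(0) - i*·ε)/(p·T+ε')⌋. -/
/-- Necessary condition for achieving the common-intersection lifetime bound:
if `Ωc = ∩_m Ω m ≠ ∅`, the residual sets `Ω m \ Ωc` are pairwise disjoint and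
nonempty, and the swarm achieves lifetime
`i* = ⌊min_{n∈Ωc} E₀ n / (p·T+ε'+ε)⌋`, then
`i* ≤ Σ_m ⌊(min_{n∈Ω m \ Ωc} E₀ n - i*·ε)/(p·T+ε')⌋`. -/
theorem stmt_7 {R : Type*} [Fintype R] [DecidableEq R]
    (M : ℕ) (Ω : Fin M → Finset R)
    (Ωc : Finset R) (hΩc : Ωc = Finset.univ.inf Ω) (hcne : Ωc.Nonempty)
    (hresne : ∀ m, (Ω m \ Ωc).Nonempty)
    (hresdisj : ∀ m₁ m₂ : Fin M, m₁ ≠ m₂ → Disjoint (Ω m₁ \ Ωc) (Ω m₂ \ Ωc))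
    (E0 : R → ℝ) (p T ε' ε : ℝ) (ha : 0 < p * T + ε') (hε : 0 ≤ ε)
    (istar : ℕ)
    (histar : istar = ⌊(Ωc.inf' hcne E0) / (p * T + ε' + ε)⌋₊)
    (w : Fin M → ℕ) (hsum : ∑ m, w m = istar)
    -- all robots retain nonnegative energy after the `istar` tasks
    (hfeasc : ∀ n ∈ Ωc,
      0 ≤ E0 n - (istar : ℝ) * (p * T + ε' + ε))
    (hfeas : ∀ m : Fin M, ∀ n ∈ Ω m \ Ωc,
      0 ≤ E0 n - (w m : ℝ) * (p * T + ε') - (istar : ℝ) * ε) :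
    istar ≤ ∑ m : Fin M,
      ⌊((Ω m \ Ωc).inf' (hresne m) E0 - (istar : ℝ) * ε) / (p * T + ε')⌋₊ := by
  conv_lhs => rw [← hsum]
  refine Finset.sum_le_sum fun m _ => ?_
  rw [Nat.le_floor_iff]
  · obtain ⟨n, hn, hEq⟩ := Finset.exists_mem_eq_inf' (hresne m) E0
    rw [hEq, le_div_iff₀ ha]
    have := hfeas m n hn
    linarith
  · obtain ⟨n, hn, hEq⟩ := Finset.exists_mem_eq_inf' (hresne m) E0
    have := hfeas m n hn
    have hw : (0:ℝ) ≤ (w m : ℝ) * (p * T + ε') := by positivity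
    rw [hEq]
    apply div_nonneg _ ha.le
    linarith
end

section
/- Selecting only robot subsets corresponding to R-Vertices of a valid partition with M̄ parts, in round robin with identical initial energies E(0), yields swarm lifetime equal to the maximum i satisfying E(0) - ⌈i/M̄⌉·(p·T+ε') - i·ε ≥ 0; moreover this lifetime is nondecreasing in M̄. -/
lemma cnt_zero_res (Mb : ℕ) (hM : 0 < Mb) (j : ℕ) :
    ((Finset.range (j+1)).filter (fun t => t % Mb = 0)).card = j / Mb + 1 := by
  induction j with
  | zero => simp [Finset.range_one, Finset.filter_singleton, Nat.zero_mod]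
  | succ j ih =>
    rw [Finset.range_add_one, Finset.filter_insert]
    by_cases hd : (j+1) % Mb = 0
    · rw [if_pos hd, Finset.card_insert_of_notMem (by simp), ih,
        Nat.succ_div_of_dvd (Nat.dvd_of_mod_eq_zero hd)]
    · rw [if_neg hd, ih, Nat.succ_div_of_not_dvd (fun hdvd => hd (Nat.dvd_iff_mod_eq_zero.mp hdvd))]

lemma cnt_res_le (Mb : ℕ) (hM : 0 < Mb) (m j : ℕ) :
    ((Finset.range (j+1)).filter (fun t => t % Mb = m)).card ≤ j / Mb + 1 := by
  have h := Finset.card_le_card_of_injOn (fun t => t / Mb)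
    (s := (Finset.range (j+1)).filter (fun t => t % Mb = m))
    (t := Finset.range (j / Mb + 1))
    (fun t ht => by
      simp only [Finset.mem_coe, Finset.mem_filter, Finset.mem_range] at ht
      simp only [Finset.mem_coe, Finset.mem_range]
      exact Nat.lt_succ_of_le (Nat.div_le_div_right (Nat.lt_succ_iff.mp ht.1)))
    (fun t₁ h₁ t₂ h₂ hdiv => by
      simp only [Finset.coe_filter, Finset.mem_range, Set.mem_setOf_eq] at h₁ h₂
      have hd : t₁ / Mb = t₂ / Mb := hdiv
      calc t₁ = Mb * (t₁/Mb) + t₁ % Mb := (Nat.div_add_mod t₁ Mb).symm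
        _ = Mb * (t₂/Mb) + t₂ % Mb := by rw [hd, h₁.2, h₂.2]
        _ = t₂ := Nat.div_add_mod t₂ Mb)
  simpa using h

lemma ceil_nat_div (Mb : ℕ) (hM : 0 < Mb) (j : ℕ) :
    ⌈((j:ℝ)+1) / (Mb : ℝ)⌉ = ((j / Mb + 1 : ℕ) : ℤ) := by
  have hMR : (0:ℝ) < Mb := by exact_mod_cast hM
  set q := j / Mb with hq
  have h1 : q * Mb ≤ j := Nat.div_mul_le_self j Mb
  have h2 : j < (q + 1) * Mb := (Nat.div_lt_iff_lt_mul hM).mp (Nat.lt_succ_self _)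
  have h1R : (q:ℝ) * Mb ≤ j := by exact_mod_cast h1
  have h2R : (j:ℝ) < ((q:ℝ) + 1) * Mb := by exact_mod_cast h2
  rw [Int.ceil_eq_iff]
  have hc : (((q + 1 : ℕ) : ℤ) : ℝ) = (q:ℝ) + 1 := by push_cast; ring
  rw [hc]
  constructor
  · rw [show (q:ℝ) + 1 - 1 = (q:ℝ) by ring, lt_div_iff₀ hMR]; linarith
  · rw [div_le_iff₀ hMR]
    have h2R' : (j:ℝ) + 1 ≤ ((q:ℝ) + 1) * Mb := by exact_mod_cast Nat.succ_le_of_lt h2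
    linarith


/-- Round-robin selection among the `Mb` pairwise-disjoint R-Vertex subsets with
identical initial energies `E0`: the set of feasible lifetimes is exactly
`{i | E0 - ⌈i/Mb⌉·(p·T+ε') - i·ε ≥ 0}` (so the swarm lifetime is the greatest
such `i`); moreover this lifetime is nondecreasing in `Mb`. -/

theorem stmt_13 {R : Type*} [Fintype R] [DecidableEq R]
    (Mb : ℕ) (hM : 1 ≤ Mb) (Ω : Fin Mb → Finset R)
    (hdisj : ∀ m₁ m₂ : Fin Mb, m₁ ≠ m₂ → Disjoint (Ω m₁) (Ω m₂))
    (hΩne : ∀ m, (Ω m).Nonempty)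
    (E0 p T ε' ε : ℝ) (hE0 : 0 ≤ E0) (ha : 0 < p * T + ε') (hε : 0 ≤ ε) :
    -- feasible lifetimes under round robin `σ t = t mod Mb` are exactly the `i`
    -- with `E0 - ⌈i/Mb⌉(p·T+ε') - i·ε ≥ 0`
    {i : ℕ | ∀ n : R, 0 ≤ E0 -
        ((Finset.range i).filter
          (fun t => n ∈ Ω ⟨t % Mb, Nat.mod_lt t (by omega)⟩)).card * (p * T + ε') -
        (i : ℝ) * ε} =
      {i : ℕ | 0 ≤ E0 - (⌈(i : ℝ) / (Mb : ℝ)⌉ : ℝ) * (p * T + ε') - (i : ℝ) * ε} ∧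
    -- the resulting lifetime is nondecreasing in the number of parts `Mb`
    (∀ (Mb₂ : ℕ) (i₁ i₂ : ℕ), Mb ≤ Mb₂ →
      IsGreatest {i : ℕ |
        0 ≤ E0 - (⌈(i : ℝ) / (Mb : ℝ)⌉ : ℝ) * (p * T + ε') - (i : ℝ) * ε} i₁ →
      IsGreatest {i : ℕ |
        0 ≤ E0 - (⌈(i : ℝ) / (Mb₂ : ℝ)⌉ : ℝ) * (p * T + ε') - (i : ℝ) * ε} i₂ →
      i₁ ≤ i₂) := by
  have hM0 : 0 < Mb := hM
  constructor
  · ext i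
    simp only [Set.mem_setOf_eq]
    constructor
    · intro h
      obtain ⟨n, hn⟩ := hΩne ⟨0, hM0⟩
      have hfe : ((Finset.range i).filter
            (fun t => n ∈ Ω ⟨t % Mb, Nat.mod_lt t (by omega)⟩)) =
          (Finset.range i).filter (fun t => t % Mb = 0) := by
        apply Finset.filter_congr
        intro t _
        constructor
        · intro hmem
          by_contra hne
          have hne' : (⟨t % Mb, Nat.mod_lt t (by omega)⟩ : Fin Mb) ≠ ⟨0, hM0⟩ :=
            fun he => hne (by simpa using congrArg Fin.val he)
          exact (Finset.disjoint_left.mp (hdisj _ _ hne') hmem) hn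
        · intro he
          simp only [he]
          exact hn
      have hh := h n
      rw [hfe] at hh
      rcases i with _ | j
      · simpa using hE0
      · rw [cnt_zero_res Mb hM0 j] at hh
        have hceil : (⌈((j+1:ℕ):ℝ) / (Mb:ℝ)⌉ : ℝ) = ((j / Mb + 1 : ℕ) : ℝ) := by
          rw [show ((j+1:ℕ):ℝ) = (j:ℝ)+1 by push_cast; ring, ceil_nat_div Mb hM0 j]
          norm_cast
        rw [hceil]
        exact hh
    · intro h n
      rcases i with _ | j
      · simpa using hE0
      · have hceil : (⌈((j+1:ℕ):ℝ) / (Mb:ℝ)⌉ : ℝ) = ((j / Mb + 1 : ℕ) : ℝ) := by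
          rw [show ((j+1:ℕ):ℝ) = (j:ℝ)+1 by push_cast; ring, ceil_nat_div Mb hM0 j]
          norm_cast
        rw [hceil] at h
        by_cases hcase : ∃ m, n ∈ Ω m
        · obtain ⟨m, hm⟩ := hcase
          have hfe : ((Finset.range (j+1)).filter
                (fun t => n ∈ Ω ⟨t % Mb, Nat.mod_lt t (by omega)⟩)) =
              (Finset.range (j+1)).filter (fun t => t % Mb = m.val) := by
            apply Finset.filter_congr
            intro t _
            constructor
            · intro hmem
              by_contra hne
              have hne' : (⟨t % Mb, Nat.mod_lt t (by omega)⟩ : Fin Mb) ≠ m :=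
                fun he => hne (by simpa using congrArg Fin.val he)
              exact (Finset.disjoint_left.mp (hdisj _ _ hne') hmem) hm
            · intro he
              have : (⟨t % Mb, Nat.mod_lt t (by omega)⟩ : Fin Mb) = m := Fin.ext he
              rw [this]
              exact hm
          rw [hfe]
          have hC : (((Finset.range (j+1)).filter (fun t => t % Mb = m.val)).card : ℝ)
              ≤ ((j / Mb + 1 : ℕ) : ℝ) := by
            exact_mod_cast cnt_res_le Mb hM0 m.val j
          have := mul_le_mul_of_nonneg_right hC ha.le
          linarith
        · push_neg at hcase
          have hfe : ((Finset.range (j+1)).filter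
                (fun t => n ∈ Ω ⟨t % Mb, Nat.mod_lt t (by omega)⟩)) = ∅ :=
            Finset.filter_false_of_mem (fun t _ => hcase _)
          rw [hfe]
          have hq : (0:ℝ) ≤ ((j / Mb + 1 : ℕ) : ℝ) := by positivity
          have := mul_le_mul_of_nonneg_right hq ha.le
          simp only [Finset.card_empty, Nat.cast_zero, zero_mul]
          linarith [mul_nonneg hq ha.le]
  · intro Mb₂ i₁ i₂ hle h₁ h₂
    apply h₂.2
    have hM₂ : (0:ℝ) < Mb₂ := by exact_mod_cast lt_of_lt_of_le hM0 hle
    have hdiv : (i₁:ℝ) / Mb₂ ≤ (i₁:ℝ) / Mb :=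
      div_le_div_of_nonneg_left (Nat.cast_nonneg i₁) (by exact_mod_cast hM0)
        (by exact_mod_cast hle)
    have hc : (⌈(i₁:ℝ)/(Mb₂:ℝ)⌉ : ℝ) ≤ (⌈(i₁:ℝ)/(Mb:ℝ)⌉ : ℝ) := by
      exact_mod_cast Int.ceil_le_ceil hdiv
    have h1 := h₁.1
    simp only [Set.mem_setOf_eq] at h1 ⊢
    have := mul_le_mul_of_nonneg_right hc ha.le
    linarith
end

section
/- With non-identical initial energies and M̄ pairwise-disjoint R-Vertex subsets Ω_{m̄}, any feasible lifetime i satisfies i ≤ Σ_{m̄=1}^{M̄} ⌊(min_{n∈Ω_{m̄}} E_n(0) - i·ε)/(p·T+ε')⌋, and among partitions with the same number of parts M̄, maximizing this right-hand side maximizes the lifetime upper bound. -/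
/-- Non-identical initial energies, `Mb` pairwise-disjoint R-Vertex subsets: any
feasible lifetime `i` satisfies
`i ≤ Σ_m ⌊(min_{n∈Ω m} E₀ n - i·ε)/(p·T+ε')⌋`; and among partitions with the
same number of parts, a pointwise larger right-hand side gives a (pointwise)
larger lifetime upper bound. -/
theorem stmt_14 {R : Type*} [Fintype R] [DecidableEq R]
    (Mb : ℕ) (Ω : Fin Mb → Finset R)
    (hdisj : ∀ m₁ m₂ : Fin Mb, m₁ ≠ m₂ → Disjoint (Ω m₁) (Ω m₂))
    (hΩne : ∀ m, (Ω m).Nonempty)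
    (E0 : R → ℝ) (p T ε' ε : ℝ) (ha : 0 < p * T + ε') (hε : 0 ≤ ε) :
    -- the lifetime upper bound
    (∀ (i : ℕ) (w : Fin Mb → ℕ), (∑ m, w m = i) →
      (∀ m : Fin Mb, ∀ n ∈ Ω m,
        0 ≤ E0 n - (w m : ℝ) * (p * T + ε') - (i : ℝ) * ε) →
      i ≤ ∑ m : Fin Mb,
        ⌊((Ω m).inf' (hΩne m) E0 - (i : ℝ) * ε) / (p * T + ε')⌋₊) ∧
    -- maximizing the right-hand side maximizes the lifetime upper bound
    (∀ (Ω' : Fin Mb → Finset R) (hΩ'ne : ∀ m, (Ω' m).Nonempty),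
      (∀ i : ℕ,
        (∑ m : Fin Mb, ⌊((Ω m).inf' (hΩne m) E0 - (i : ℝ) * ε) / (p * T + ε')⌋₊) ≤
        (∑ m : Fin Mb, ⌊((Ω' m).inf' (hΩ'ne m) E0 - (i : ℝ) * ε) / (p * T + ε')⌋₊)) →
      {i : ℕ | i ≤ ∑ m : Fin Mb,
          ⌊((Ω m).inf' (hΩne m) E0 - (i : ℝ) * ε) / (p * T + ε')⌋₊} ⊆
      {i : ℕ | i ≤ ∑ m : Fin Mb,
          ⌊((Ω' m).inf' (hΩ'ne m) E0 - (i : ℝ) * ε) / (p * T + ε')⌋₊}) := by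
  constructor
  · intro i w hw hfeas
    refine le_trans (le_of_eq hw.symm) (Finset.sum_le_sum ?_)
    intro m _
    apply Nat.le_floor
    rw [le_div_iff₀ ha]
    obtain ⟨n, hn, hmin⟩ := (Ω m).exists_mem_eq_inf' (hΩne m) E0
    have := hfeas m n hn
    rw [hmin]; linarith
  · intro Ω' hΩ'ne hle i hi
    exact le_trans hi (hle i)
end

section
/- In the fading-channel model where robot n selected w_n times pays total communication energy w_n·(p̄_n·T + ε') with p̄_n its average transmit power, nonnegativity of remaining energy after i tasks implies w_n ≤ ⌊(E_n(0) - i·ε)/(p̄_n·T + ε')⌋; hence the lifetime satisfies i ≤ Σ_{m̄=1}^{M̄} min_{n∈Ω_{m̄}} ⌊(E_n(0) - i·ε)/(p̄_n·T + ε')⌋ for pairwise-disjoint subsets Ω_{m̄} with exactly one subset selected per task. -/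
/-- Fading-channel model: robot `n`, selected `w` times, pays total
communication energy `w·(p̄ n·T + ε')` with robot-dependent average power
`p̄ n > 0`.  Nonnegative remaining energy after `i` tasks gives
`w m ≤ ⌊(E₀ n - i·ε)/(p̄ n·T + ε')⌋` for every `n ∈ Ω m`, hence
`i ≤ Σ_m min_{n∈Ω m} ⌊(E₀ n - i·ε)/(p̄ n·T + ε')⌋`. -/
theorem stmt_15 {R : Type*} [Fintype R] [DecidableEq R]
    (Mb : ℕ) (Ω : Fin Mb → Finset R)
    (hdisj : ∀ m₁ m₂ : Fin Mb, m₁ ≠ m₂ → Disjoint (Ω m₁) (Ω m₂))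
    (hΩne : ∀ m, (Ω m).Nonempty)
    (E0 pbar : R → ℝ) (T ε' ε : ℝ)
    (hT : 0 < T) (hε' : 0 ≤ ε') (hε : 0 ≤ ε) (hpbar : ∀ n, 0 < pbar n)
    (i : ℕ) (w : Fin Mb → ℕ) (hsum : ∑ m, w m = i)
    (hfeas : ∀ m : Fin Mb, ∀ n ∈ Ω m,
      0 ≤ E0 n - (w m : ℝ) * (pbar n * T + ε') - (i : ℝ) * ε) :
    (∀ m : Fin Mb, ∀ n ∈ Ω m,
      w m ≤ ⌊(E0 n - (i : ℝ) * ε) / (pbar n * T + ε')⌋₊) ∧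
    i ≤ ∑ m : Fin Mb, (Ω m).inf' (hΩne m)
      (fun n => ⌊(E0 n - (i : ℝ) * ε) / (pbar n * T + ε')⌋₊) := by
  have key : ∀ m : Fin Mb, ∀ n ∈ Ω m,
      w m ≤ ⌊(E0 n - (i : ℝ) * ε) / (pbar n * T + ε')⌋₊ := by
    intro m n hn
    have hpos : 0 < pbar n * T + ε' :=
      lt_of_lt_of_le (mul_pos (hpbar n) hT) (le_add_of_nonneg_right hε')
    apply Nat.le_floor
    rw [le_div_iff₀ hpos]
    have := hfeas m n hn
    linarith
  refine ⟨key, ?_⟩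
  calc i = ∑ m, w m := hsum.symm
    _ ≤ _ := Finset.sum_le_sum (fun m _ => Finset.le_inf' _ _ (fun n hn => key m n hn))
end
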